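/- Let f : ℝ → ℝ satisfy (f(y) - f(y'))·(y - y') ≤ L·|y - y'|² for all y, y' ∈ ℝ. Define f_n(y) = inf_{x ∈ ℝ} { n·|y - x| + f(x) - L·x } + L·y (assuming the infimum is finite for all y). Then f_n also satisfies the same one-sided Lipschitz condition: (f_n(y) - f_n(y'))·(y - y') ≤ L·|y - y'|² for all y, y' ∈ ℝ. -/

import Mathlib

open Real

/-!
Since `|y - y'| ^ 2 = (y - y') ^ 2`, the one-sided Lipschitz condition with constant `L` says exactly
that `g = f - L • id` is antitone. An inf-convolution `y ↦ ⨅ x, c * |y - x| + g x` of an antitone `g`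
is again antitone (shift the competitor `x` by `b - a`), and adding `L • id` back gives `f_n`.
-/

def OneSidedLipschitz (L : ℝ) (f : ℝ → ℝ) : Prop :=
  ∀ y y', (f y - f y') * (y - y') ≤ L * |y - y'| ^ 2

theorem antitone_iff_forall_sub_mul_sub_nonpos {α : Type*} [Ring α] [LinearOrder α]
    [IsStrictOrderedRing α] {g : α → α} : Antitone g ↔ ∀ a b, (g a - g b) * (a - b) ≤ 0 := by
  constructor
  · intro hg a b
    rcases le_total a b with hab | hba
    · exact mul_nonpos_of_nonneg_of_nonpos (sub_nonneg.2 (hg hab)) (sub_nonpos.2 hab)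
    · exact mul_nonpos_of_nonpos_of_nonneg (sub_nonpos.2 (hg hba)) (sub_nonneg.2 hba)
  · intro h a b hab
    rcases hab.eq_or_lt with rfl | hlt
    · rfl
    · exact sub_nonpos.1 (nonpos_of_mul_nonpos_left (h b a) (sub_pos.2 hlt))

theorem oneSidedLipschitz_iff_antitone_sub_mul {L : ℝ} {f : ℝ → ℝ} :
    OneSidedLipschitz L f ↔ Antitone fun x => f x - L * x := by
  have key : ∀ y y', (f y - f y') * (y - y') - L * |y - y'| ^ 2
      = ((f y - L * y) - (f y' - L * y')) * (y - y') := by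
    intro y y'
    rw [sq_abs]
    ring
  simp only [OneSidedLipschitz, antitone_iff_forall_sub_mul_sub_nonpos, ← key, sub_nonpos]

theorem Antitone.iInf_mul_abs_sub_add {g : ℝ → ℝ} (hg : Antitone g) (c : ℝ)
    (hbdd : ∀ y, BddBelow (Set.range fun x => c * |y - x| + g x)) :
    Antitone fun y => ⨅ x, c * |y - x| + g x := by
  intro a b hab
  refine le_ciInf fun x => (ciInf_le (hbdd b) (x + (b - a))).trans ?_
  rw [show b - (x + (b - a)) = a - x by ring]
  gcongr
  exact hg (by linarith)

theorem stmt2_general (f : ℝ → ℝ) (L : ℝ)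
    (hmono : ∀ y y', (f y - f y') * (y - y') ≤ L * |y - y'| ^ 2)
    (hbdd : ∀ n : ℕ, ∀ y : ℝ,
      BddBelow (Set.range fun x : ℝ => (n : ℝ) * |y - x| + f x - L * x))
    (fn : ℕ → ℝ → ℝ)
    (hfn : ∀ n y, fn n y = (⨅ x : ℝ, ((n : ℝ) * |y - x| + f x - L * x)) + L * y) :
    ∀ n : ℕ, ∀ y y' : ℝ, (fn n y - fn n y') * (y - y') ≤ L * |y - y'| ^ 2 := by
  intro n
  simp only [add_sub_assoc] at hbdd hfn
  have hg : Antitone fun x => f x - L * x := oneSidedLipschitz_iff_antitone_sub_mul.1 hmono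
  have hh := hg.iInf_mul_abs_sub_add n (hbdd n)
  show OneSidedLipschitz L (fn n)
  refine oneSidedLipschitz_iff_antitone_sub_mul.2 ?_
  simpa only [hfn, add_sub_cancel_right] using hh

theorem stmt2 (f : ℝ → ℝ) (L : ℝ) (hL : 0 < L)
    (hmono : ∀ y y', (f y - f y') * (y - y') ≤ L * |y - y'| ^ 2)
    (hbdd : ∀ n : ℕ, ∀ y : ℝ,
      BddBelow (Set.range fun x : ℝ => (n : ℝ) * |y - x| + f x - L * x))
    (fn : ℕ → ℝ → ℝ)
    (hfn : ∀ n y, fn n y = (⨅ x : ℝ, ((n : ℝ) * |y - x| + f x - L * x)) + L * y) :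
    ∀ n : ℕ, ∀ y y' : ℝ, (fn n y - fn n y') * (y - y') ≤ L * |y - y'| ^ 2 :=
  stmt2_general f L hmono hbdd fn hfn
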